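/- arXiv:math/0606004 — 3 statements merged into one kernel-verified Lean document; each statement's English description precedes it below -/
import Mathlib

section
/- Let 𝒫 be a weak parallelogram structure on a nonempty set X. For every finitely supported function f: X → ℂ, the sum ∑_{(x00,x01,x10,x11)∈𝒫} f(x00)·conj(f(x01))·conj(f(x10))·f(x11) is a nonnegative real number. Consequently ‖f‖_𝒫 := (this sum)^{1/4} is well defined, the map f ↦ ‖f‖_𝒫 is a seminorm on the space of finitely supported complex-valued functions on X, and it is a norm if and only if the structure 𝒫 is strong. -/
open scoped Pointwise

namespace HK

/-- Quadruples of elements of `X`, indexed by the vertices `00, 01, 10, 11` of the square. -/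
abbrev Quad (X : Type) := X × X × X × X

/-- Vertices of the cube `{0,1}³`. -/
abbrev Vtx := Fin 3 → Bool

/-- Elements of `X^{[3]} = X⁸`, indexed by the vertices of the cube. -/
abbrev Cube (X : Type) := Vtx → X

variable {X Y : Type}

/-- Apply a map coordinatewise to a quadruple. -/
def map4 (f : X → Y) (p : Quad X) : Quad Y := (f p.1, f p.2.1, f p.2.2.1, f p.2.2.2)

/-- Apply a map coordinatewise to a cube. -/
def mapCube (f : X → Y) (x : Cube X) : Cube Y := fun v => f (x v)

/-- A weak parallelogram structure: the relation `(x00,x01) ∼ (x10,x11) ↔ (x00,x01,x10,x11) ∈ P`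
is an equivalence relation, `P` is invariant under exchanging the two middle entries, and
any three points can be completed to a parallelogram. -/
def IsWeakParallelogram (P : Set (Quad X)) : Prop :=
  (∀ a b : X, (a, b, a, b) ∈ P) ∧
  (∀ a b c d : X, (a, b, c, d) ∈ P → (c, d, a, b) ∈ P) ∧
  (∀ a b c d e f : X, (a, b, c, d) ∈ P → (c, d, e, f) ∈ P → (a, b, e, f) ∈ P) ∧
  (∀ a b c d : X, (a, b, c, d) ∈ P → (a, c, b, d) ∈ P) ∧
  (∀ a b c : X, ∃ d, (a, b, c, d) ∈ P)

/-- A strong parallelogram structure: the completing fourth point is unique. -/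
def IsStrongParallelogram (P : Set (Quad X)) : Prop :=
  IsWeakParallelogram P ∧ ∀ a b c : X, ∃! d, (a, b, c, d) ∈ P

/-- The entry of a quadruple at a vertex of the square. -/
def quadAt (p : Quad X) : Bool → Bool → X
  | false, false => p.1
  | false, true => p.2.1
  | true, false => p.2.2.1
  | true, true => p.2.2.2

/-- The cube whose face `ε₁ = 0` is `p` and whose face `ε₁ = 1` is `q`. -/
def joinQuad (p q : Quad X) : Cube X :=
  fun v => if v 0 = false then quadAt p (v 1) (v 2) else quadAt q (v 1) (v 2)

/-- The vertex of the cube with value `b` at coordinate `i` and values `u,v` at the two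
remaining coordinates, taken in increasing order. -/
def insert3 (i : Fin 3) (b u v : Bool) : Vtx :=
  if i = 0 then ![b, u, v] else if i = 1 then ![u, b, v] else ![u, v, b]

/-- The face `{v : v i = b}` of a cube, as a quadruple in lexicographic order. -/
def face (x : Cube X) (i : Fin 3) (b : Bool) : Quad X :=
  (x (insert3 i b false false), x (insert3 i b false true),
   x (insert3 i b true false), x (insert3 i b true true))

/-- The permutations of the vertices of the cube induced by Euclidean isometries of the unit
cube: a permutation of the three coordinates composed with flips of some coordinates. -/
def cubeSym (σ : Equiv.Perm (Fin 3)) (c : Vtx) (v : Vtx) : Vtx :=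
  fun j => xor (v (σ j)) (c j)

/-- A weak parallelepiped structure `(P, Q)`: every face of an element of `Q` lies in `P`;
`Q` is invariant under the Euclidean permutations of the cube; the relation `≈` on `P`
(`p ≈ q ↔ joinQuad p q ∈ Q`) is an equivalence relation; and seven points whose three
determined faces lie in `P` can be completed to an element of `Q`. -/
def IsWeakParallelepiped (P : Set (Quad X)) (Q : Set (Cube X)) : Prop :=
  IsWeakParallelogram P ∧
  (∀ x ∈ Q, ∀ (i : Fin 3) (b : Bool), face x i b ∈ P) ∧
  (∀ (σ : Equiv.Perm (Fin 3)) (c : Vtx), ∀ x ∈ Q, (fun v => x (cubeSym σ c v)) ∈ Q) ∧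
  (∀ p ∈ P, joinQuad p p ∈ Q) ∧
  (∀ p q : Quad X, joinQuad p q ∈ Q → joinQuad q p ∈ Q) ∧
  (∀ p q r : Quad X, joinQuad p q ∈ Q → joinQuad q r ∈ Q → joinQuad p r ∈ Q) ∧
  (∀ x000 x001 x010 x011 x100 x101 x110 : X,
    (x000, x001, x010, x011) ∈ P → (x000, x010, x100, x110) ∈ P →
    (x000, x001, x100, x101) ∈ P →
    ∃ x111, joinQuad (x000, x001, x010, x011) (x100, x101, x110, x111) ∈ Q)

/-- A strong parallelepiped structure: the completing eighth point is unique. -/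
def IsStrongParallelepiped (P : Set (Quad X)) (Q : Set (Cube X)) : Prop :=
  IsWeakParallelepiped P Q ∧
  ∀ x000 x001 x010 x011 x100 x101 x110 : X,
    (x000, x001, x010, x011) ∈ P → (x000, x010, x100, x110) ∈ P →
    (x000, x001, x100, x101) ∈ P →
    ∃! x111, joinQuad (x000, x001, x010, x011) (x100, x101, x110, x111) ∈ Q

/-- The setoid on `X²` given by the parallelogram relation `∼`. -/
def baseSetoid (P : Set (Quad X)) (hP : IsWeakParallelogram P) : Setoid (X × X) where
  r p q := (p.1, p.2, q.1, q.2) ∈ P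
  iseqv := ⟨fun p => hP.1 p.1 p.2,
            fun h => hP.2.1 _ _ _ _ h,
            fun h h' => hP.2.2.1 _ _ _ _ _ _ h h'⟩

/-- The base `B = X²/∼` of a weak parallelogram structure. -/
def Base (P : Set (Quad X)) (hP : IsWeakParallelogram P) : Type := Quotient (baseSetoid P hP)

/-- The class `⟨x,y⟩ ∈ B` of a pair `(x,y)`. -/
def cls (P : Set (Quad X)) (hP : IsWeakParallelogram P) (x y : X) : Base P hP :=
  Quotient.mk (baseSetoid P hP) (x, y)

/-- The Gowers-type sum over parallelograms attached to a finitely supported `f : X → ℂ`. -/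
noncomputable def gSum2 (P : Set (Quad X)) (f : X →₀ ℂ) : ℂ :=
  ∑ᶠ q ∈ P, f q.1 * (starRingEnd ℂ) (f q.2.1) * (starRingEnd ℂ) (f q.2.2.1) * f q.2.2.2

/-- The seminorm `‖f‖_P = (gSum2 P f)^{1/4}`. -/
noncomputable def pNorm (P : Set (Quad X)) (f : X →₀ ℂ) : ℝ :=
  (gSum2 P f).re ^ ((1 : ℝ) / 4)

/-- `C^{|ε|} z`: conjugate `z` when the vertex `v` has an odd number of `1` entries. -/
noncomputable def cConjFactor (v : Vtx) (z : ℂ) : ℂ :=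
  if xor (v 0) (xor (v 1) (v 2)) then (starRingEnd ℂ) z else z

/-- The Gowers-type sum over parallelepipeds attached to a finitely supported `f : X → ℂ`. -/
noncomputable def gSum3 (Q : Set (Cube X)) (f : X →₀ ℂ) : ℂ :=
  ∑ᶠ x ∈ Q, ∏ v : Vtx, cConjFactor v (f (x v))

/-- The seminorm `‖f‖_Q = (gSum3 Q f)^{1/8}`. -/
noncomputable def qNorm (Q : Set (Cube X)) (f : X →₀ ℂ) : ℝ :=
  (gSum3 Q f).re ^ ((1 : ℝ) / 8)

/-- The structure group of a parallelepiped structure, as a set of bijections of `X`: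
those `g` mapping every parallelogram to an equivalent parallelogram. -/
def structSet (P : Set (Quad X)) (Q : Set (Cube X)) : Set (Equiv.Perm X) :=
  {g | ∀ p ∈ P, map4 g p ∈ P ∧ joinQuad (map4 g p) p ∈ Q}

/-- `x` and `y` lie in the same fiber of `π : X → B`, `π(x) = ⟨i,x⟩`. -/
def sameFiber (P : Set (Quad X)) (i x y : X) : Prop := (i, x, i, y) ∈ P

/-- A vertical quadruple: all four points lie in one fiber. -/
def VerticalQ (P : Set (Quad X)) (i : X) (w : Quad X) : Prop :=
  sameFiber P i w.1 w.2.1 ∧ sameFiber P i w.2.1 w.2.2.1 ∧ sameFiber P i w.2.2.1 w.2.2.2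

/-- `y = u·x` where `u = [w]` is the class of the vertical parallelogram `w`:
`(x,x,x,y)` is a parallelogram equivalent to `w`. -/
def actsRel (P : Set (Quad X)) (Q : Set (Cube X)) (w : Quad X) (x y : X) : Prop :=
  (x, x, x, y) ∈ P ∧ joinQuad (x, x, x, y) w ∈ Q

section Groups

variable (G : Type) [Group G]

/-- The diagonal embedding `G → G^{[2]}`. -/
def diagHom2 : G →* Quad G where
  toFun g := (g, g, g, g)
  map_one' := rfl
  map_mul' _ _ := rfl

/-- The diagonal embedding `G → G^{[3]}`. -/
def diagHom3 : G →* Cube G where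
  toFun g := fun _ => g
  map_one' := rfl
  map_mul' _ _ := rfl

/-- The two dimensional edge group `G^{[2,1]}`. -/
def edgeGroup2 : Subgroup (Quad G) :=
  Subgroup.closure
    {q : Quad G | ∃ g : G, q = (g, g, 1, 1) ∨ q = (g, 1, g, 1) ∨ q = (g, g, g, g)}

/-- The second commutator subgroup `G₃ = [G, G₂]`. -/
def secondCommutator : Subgroup G := ⁅(⊤ : Subgroup G), commutator G⁆

variable {G}

/-- The edge group `F^{[2,1]}` of a subgroup `F ≤ G`, inside `G^{[2]}`. -/
def edgeGroup2Of (F : Subgroup G) : Subgroup (Quad G) :=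
  Subgroup.closure
    {q : Quad G | ∃ u ∈ F, q = (u, u, 1, 1) ∨ q = (u, 1, u, 1) ∨ q = (u, u, u, u)}

/-- `F^{[2]} = F⁴` as a subgroup of `G^{[2]}`. -/
def quadSub (F : Subgroup G) : Subgroup (Quad G) := F.prod (F.prod (F.prod F))

/-- Faces of the cube `{0,1}³`. -/
def IsFace3 (α : Set Vtx) : Prop := ∃ (i : Fin 3) (b : Bool), α = {v : Vtx | v i = b}

/-- Edges of the cube `{0,1}³`. -/
def IsEdge3 (α : Set Vtx) : Prop :=
  ∃ (i j : Fin 3) (b c : Bool), i ≠ j ∧ α = {v : Vtx | v i = b ∧ v j = c}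

open Classical in
/-- The element `g^{[3,α]}` of `G^{[3]}`, with coordinate `g` on `α` and `1` elsewhere. -/
noncomputable def cubeElt (α : Set Vtx) (g : G) : Cube G :=
  fun v => if v ∈ α then g else 1

variable (G)

/-- The face group `G^{[3,2]}`, generated by the `g^{[3,f]}` for faces `f` of the cube. -/
noncomputable def faceGroup : Subgroup (Cube G) :=
  Subgroup.closure {x : Cube G | ∃ (g : G) (α : Set Vtx), IsFace3 α ∧ x = cubeElt α g}

variable {G}

/-- The edge group `F^{[3,1]}` of a subgroup `F ≤ G`, generated by the `u^{[3,e]}` for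
`u ∈ F` and edges `e` of the cube. -/
noncomputable def edgeGroup3 (F : Subgroup G) : Subgroup (Cube G) :=
  Subgroup.closure {x : Cube G | ∃ u ∈ F, ∃ α : Set Vtx, IsEdge3 α ∧ x = cubeElt α u}

end Groups

/-- The data realizing `(PY, QY)` as the nilparallelepiped structure associated to
`G`, `F`, `Γ` via the coset projection `p : G → Y ≅ G/Γ`. -/
def NilWitness (G : Type) [Group G] (F Γ : Subgroup G) {Y : Type} (p : G → Y)
    (PY : Set (Quad Y)) (QY : Set (Cube Y)) : Prop :=
  commutator G ≤ F ∧ F ≤ Subgroup.center G ∧ Γ ⊓ F = ⊥ ∧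
  Function.Surjective p ∧ (∀ g g' : G, p g = p g' ↔ g⁻¹ * g' ∈ Γ) ∧
  PY = map4 p '' ((edgeGroup2 G : Set (Quad G)) * (quadSub F : Set (Quad G))) ∧
  QY = mapCube p '' ((faceGroup G : Set (Cube G)) * (edgeGroup3 F : Set (Cube G)))

/-- `(PY, QY)` is a nilparallelepiped structure. -/
def IsNilStructure {Y : Type} (PY : Set (Quad Y)) (QY : Set (Cube Y)) : Prop :=
  ∃ (G : Type) (inst : Group G) (F Γ : @Subgroup G inst) (p : G → Y),
    @NilWitness G inst F Γ Y p PY QY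

/-- A splitting of the exact sequence `0 → F → P_s → B → 0` for `s = ⟨a₀, b₀⟩`, encoded
by a lift `ψ : X → 𝒫_s` of a homomorphism section `φ : B → P_s` of `q_s`:
`ψ x` is a parallelogram in `𝒫_s` representing the class `φ(π(x))`. -/
def IsSplittingAt (P : Set (Quad X)) (Q : Set (Cube X)) (i a₀ b₀ : X) : Prop :=
  ∃ ψ : X → Quad X,
    (∀ x, ψ x ∈ P) ∧
    (∀ x, (a₀, b₀, (ψ x).1, (ψ x).2.1) ∈ P) ∧
    (∀ x, ((ψ x).1, (ψ x).2.2.1, i, x) ∈ P) ∧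
    (∀ x y, (i, x, i, y) ∈ P → joinQuad (ψ x) (ψ y) ∈ Q) ∧
    (∀ x1 x2 x3, (x1, x3, i, x2) ∈ P →
      ∃ c d, joinQuad ((ψ x1).2.2.1, (ψ x1).2.2.2, c, d) (ψ x2) ∈ Q ∧
        joinQuad ((ψ x1).1, (ψ x1).2.1, c, d) (ψ x3) ∈ Q)

/-- `(B, c)` is a realization of the base group of the parallelogram structure `P`,
`c x y` realizing the class `⟨x,y⟩`. -/
def IsBaseRealization (P : Set (Quad X)) (B : Type) [AddCommGroup B] (c : X → X → B) : Prop :=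
  (Function.Surjective fun p : X × X => c p.1 p.2) ∧
  (∀ a b a' b' : X, c a b = c a' b' ↔ (a, b, a', b') ∈ P) ∧
  (∀ a b d : X, c a b + c b d = c a d)

/-- `(F, fl)` is a realization of the fiber group of the parallelepiped structure `(P, Q)`:
`fl` maps vertical parallelograms onto `F`, separates exactly the `≈`-classes, and is
additive with respect to the composition of vertical parallelograms. -/
def IsFiberRealization (P : Set (Quad X)) (Q : Set (Cube X)) (i : X) (F : Type)
    [AddCommGroup F] (fl : Quad X → F) : Prop :=
  (∀ u : F, ∃ w, VerticalQ P i w ∧ fl w = u) ∧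
  (∀ w w' : Quad X, VerticalQ P i w → VerticalQ P i w' →
    (fl w = fl w' ↔ joinQuad w w' ∈ Q)) ∧
  (∀ x0 x1 x2 x3 x4 x5 : X, sameFiber P i x0 x1 → sameFiber P i x1 x2 →
    sameFiber P i x2 x3 → sameFiber P i x3 x4 → sameFiber P i x4 x5 →
    fl (x0, x1, x2, x3) + fl (x2, x3, x4, x5) = fl (x0, x1, x4, x5))

/-- A divisible (equivalently, injective) abelian group. -/
def IsDivisibleGroup (F : Type) [AddCommGroup F] : Prop :=
  ∀ (u : F) (n : ℕ), 0 < n → ∃ v : F, n • v = u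

/-- A projective abelian group (projective as a `ℤ`-module). -/
def IsProjectiveAdd (B : Type) [AddCommGroup B] : Prop := Module.Projective ℤ B

/-! Pushing `f ⊗ conj g` forward along `(x, y) ↦ ⟨x, y⟩` to the base `B = X²/∼` gives
`pushPair f g = ∑ x y, f x * conj (g y) • δ_⟨x,y⟩ ∈ ℓ²(B)`. Since `(a, b, c, d) ∈ 𝒫` exactly when
`⟨a, b⟩ = ⟨c, d⟩`, the Gowers sum `∑_{𝒫} f a * conj (g b) * conj (u c) * v d` is the inner product
`⟪pushPair u v, pushPair f g⟫`, so `‖f‖_𝒫 ^ 4 = ‖pushPair f f‖ ^ 2 ≥ 0`. Exchanging the middle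
entries of 𝒫 gives `‖pushPair f g‖ ^ 2 = ⟪pushPair g g, pushPair f f⟫`, which by Cauchy–Schwarz is
at most `‖f‖_𝒫 ^ 2 * ‖g‖_𝒫 ^ 2`; expanding `pushPair (f + g) (f + g)` sesquilinearly then yields
the triangle inequality.

If 𝒫 is strong, the class `⟨x, x⟩` consists of the diagonal pairs only, so
`pushPair f f ⟨x, x⟩ = ∑ y, |f y| ^ 2 > 0` for `f ≠ 0`. Otherwise some `(x, x, y, z) ∈ 𝒫` has
`y ≠ z`; then all four pairs in `{y, z}²` lie in `⟨x, x⟩` and `pushPair f f = 0` for `f = δ_y - δ_z`.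
-/

section GowersTwoSeminorm

open Finset ComplexConjugate
open scoped InnerProductSpace Classical

variable {X : Type} {P : Set (Quad X)}

namespace IsWeakParallelogram

variable {a b c d : X}

theorem symm (hP : IsWeakParallelogram P) (h : (a, b, c, d) ∈ P) : (c, d, a, b) ∈ P :=
  hP.2.1 _ _ _ _ h

theorem trans (hP : IsWeakParallelogram P) {e f : X} (h : (a, b, c, d) ∈ P)
    (h' : (c, d, e, f) ∈ P) : (a, b, e, f) ∈ P :=
  hP.2.2.1 _ _ _ _ _ _ h h'

theorem swap (hP : IsWeakParallelogram P) (h : (a, b, c, d) ∈ P) : (a, c, b, d) ∈ P :=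
  hP.2.2.2.1 _ _ _ _ h

theorem diag (hP : IsWeakParallelogram P) (a b : X) : (a, a, b, b) ∈ P := hP.swap (hP.1 a b)

theorem diag_comm (hP : IsWeakParallelogram P) (h : (a, a, b, c) ∈ P) : (a, a, c, b) ∈ P :=
  hP.swap (hP.symm (hP.swap h))

end IsWeakParallelogram

theorem cls_eq_cls_iff (hP : IsWeakParallelogram P) {a b c d : X} :
    cls P hP a b = cls P hP c d ↔ (a, b, c, d) ∈ P :=
  ⟨Quotient.exact, fun h => Quotient.sound h⟩

theorem isStrongParallelogram_iff (hP : IsWeakParallelogram P) :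
    IsStrongParallelogram P ↔ ∀ x y z : X, (x, x, y, z) ∈ P → y = z := by
  refine ⟨fun hS x y z h => (hS.2 x x y).unique (hP.diag x y) h, fun H => ⟨hP, fun a b c => ?_⟩⟩
  obtain ⟨d, hd⟩ := hP.2.2.2.2 a b c
  exact ⟨d, hd, fun d' hd' => (H c d d' (hP.swap (hP.trans (hP.symm hd) hd'))).symm⟩

noncomputable def gowersForm (P : Set (Quad X)) (f g u v : X →₀ ℂ) : ℂ :=
  ∑ᶠ q ∈ P, f q.1 * conj (g q.2.1) * conj (u q.2.2.1) * v q.2.2.2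

theorem gowersForm_comm_middle (hP : IsWeakParallelogram P) (f g u v : X →₀ ℂ) :
    gowersForm P f g u v = gowersForm P f u g v := by
  let σ : Quad X → Quad X := fun q => (q.1, q.2.2.1, q.2.1, q.2.2.2)
  have hσ : Set.MapsTo σ P P := fun _ hq => hP.swap hq
  exact finsum_mem_eq_of_bijOn σ (Set.InvOn.bijOn ⟨fun _ _ => rfl, fun _ _ => rfl⟩ hσ hσ)
    fun _ _ => by ring

theorem gowersForm_eq_sum {f g u v : X →₀ ℂ} {A : Finset X} (hf : f.support ⊆ A)
    (hg : g.support ⊆ A) (hu : u.support ⊆ A) (hv : v.support ⊆ A) :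
    gowersForm P f g u v = ∑ a ∈ A, ∑ b ∈ A, ∑ c ∈ A, ∑ d ∈ A,
      if (a, b, c, d) ∈ P then f a * conj (g b) * conj (u c) * v d else 0 := by
  rw [gowersForm, finsum_mem_def, finsum_eq_sum_of_support_subset (s := A ×ˢ A ×ˢ A ×ˢ A)]
  · simp only [sum_product, Set.indicator_apply]
  · rw [Set.support_indicator]
    rintro q ⟨-, hq⟩
    simp only [Function.mem_support, ne_eq, mul_eq_zero, map_eq_zero, not_or] at hq
    simp only [coe_product, Set.mem_prod, mem_coe]
    exact ⟨hf (Finsupp.mem_support_iff.2 hq.1.1.1), hg (Finsupp.mem_support_iff.2 hq.1.1.2),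
      hu (Finsupp.mem_support_iff.2 hq.1.2), hv (Finsupp.mem_support_iff.2 hq.2)⟩

noncomputable def pushPair (P : Set (Quad X)) (hP : IsWeakParallelogram P) (f g : X →₀ ℂ) :
    lp (fun _ : Base P hP => ℂ) 2 :=
  f.sum fun x a => g.sum fun y b => lp.single 2 (cls P hP x y) (a * conj b)

theorem pushPair_eq_sum (hP : IsWeakParallelogram P) {f g : X →₀ ℂ} {A : Finset X}
    (hf : f.support ⊆ A) (hg : g.support ⊆ A) :
    pushPair P hP f g = ∑ x ∈ A, ∑ y ∈ A, lp.single 2 (cls P hP x y) (f x * conj (g y)) := by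
  rw [pushPair, Finsupp.sum_of_support_subset f hf _ (by simp)]
  exact sum_congr rfl fun x _ => Finsupp.sum_of_support_subset g hg _ (by simp)

theorem pushPair_apply (hP : IsWeakParallelogram P) {f g : X →₀ ℂ} {A : Finset X}
    (hf : f.support ⊆ A) (hg : g.support ⊆ A) (t : Base P hP) :
    pushPair P hP f g t = ∑ x ∈ A, ∑ y ∈ A, if cls P hP x y = t then f x * conj (g y) else 0 := by
  simp only [pushPair_eq_sum hP hf hg, lp.coeFn_sum, Finset.sum_apply, lp.coeFn_single,
    Pi.single_apply, eq_comm]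

theorem pushPair_add_left (hP : IsWeakParallelogram P) (f g h : X →₀ ℂ) :
    pushPair P hP (f + g) h = pushPair P hP f h + pushPair P hP g h :=
  Finsupp.sum_add_index' (by simp) fun _ _ _ => by simp [add_mul, Finsupp.sum_add]

theorem pushPair_add_right (hP : IsWeakParallelogram P) (f g h : X →₀ ℂ) :
    pushPair P hP f (g + h) = pushPair P hP f g + pushPair P hP f h := by
  simp only [pushPair, ← Finsupp.sum_add]
  exact Finsupp.sum_congr fun _ _ =>
    Finsupp.sum_add_index' (by simp) fun _ _ _ => by simp [mul_add]

theorem pushPair_smul_left (hP : IsWeakParallelogram P) (c : ℂ) (f g : X →₀ ℂ) :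
    pushPair P hP (c • f) g = c • pushPair P hP f g := by
  simp only [pushPair, Finsupp.smul_sum]
  rw [Finsupp.sum_smul_index' (by simp)]
  simp [← lp.single_smul, mul_assoc]

theorem pushPair_smul_right (hP : IsWeakParallelogram P) (c : ℂ) (f g : X →₀ ℂ) :
    pushPair P hP f (c • g) = conj c • pushPair P hP f g := by
  simp only [pushPair, Finsupp.smul_sum]
  refine Finsupp.sum_congr fun _ _ => ?_
  rw [Finsupp.sum_smul_index' (by simp)]
  simp [← lp.single_smul, mul_left_comm]

theorem inner_pushPair (hP : IsWeakParallelogram P) (f g u v : X →₀ ℂ) :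
    ⟪pushPair P hP u v, pushPair P hP f g⟫_ℂ = gowersForm P f g u v := by
  set A := f.support ∪ g.support ∪ u.support ∪ v.support
  have hf : f.support ⊆ A := fun x hx => by simp [A, hx]
  have hg : g.support ⊆ A := fun x hx => by simp [A, hx]
  have hu : u.support ⊆ A := fun x hx => by simp [A, hx]
  have hv : v.support ⊆ A := fun x hx => by simp [A, hx]
  simp only [pushPair_eq_sum hP hu hv, sum_inner, lp.inner_single_left, pushPair_apply hP hf hg,
    cls_eq_cls_iff, gowersForm_eq_sum hf hg hu hv, RCLike.inner_apply, sum_mul]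
  simp only [← sum_product']
  let τ : Quad X → Quad X := fun q => (q.2.2.1, q.2.2.2, q.1, q.2.1)
  refine sum_nbij' τ τ (by simp +contextual [τ]) (by simp +contextual [τ]) (fun _ _ => rfl)
    (fun _ _ => rfl) fun q _ => ?_
  split_ifs
  · simp only [map_mul, Complex.conj_conj]
    ring
  · rw [zero_mul]

theorem gSum2_eq_norm_sq (hP : IsWeakParallelogram P) (f : X →₀ ℂ) :
    gSum2 P f = ((‖pushPair P hP f f‖ ^ 2 : ℝ) : ℂ) := by
  change gowersForm P f f f f = _
  rw [← inner_pushPair]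
  exact_mod_cast inner_self_eq_norm_sq_to_K _

theorem pNorm_eq_sqrt_norm (hP : IsWeakParallelogram P) (f : X →₀ ℂ) :
    pNorm P f = √‖pushPair P hP f f‖ := by
  rw [pNorm, gSum2_eq_norm_sq hP, Complex.ofReal_re, Real.sqrt_eq_rpow, ← Real.rpow_natCast,
    ← Real.rpow_mul (norm_nonneg _)]
  norm_num

theorem norm_pushPair_sq_le (hP : IsWeakParallelogram P) (f g : X →₀ ℂ) :
    ‖pushPair P hP f g‖ ^ 2 ≤ ‖pushPair P hP f f‖ * ‖pushPair P hP g g‖ := by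
  have hcomm : ⟪pushPair P hP f g, pushPair P hP f g⟫_ℂ =
      ⟪pushPair P hP g g, pushPair P hP f f⟫_ℂ := by
    rw [inner_pushPair, inner_pushPair, gowersForm_comm_middle hP]
  rw [@norm_sq_eq_re_inner ℂ, hcomm, mul_comm]
  exact re_inner_le_norm _ _

theorem sqrt_norm_add_add_add_le {E : Type*} [SeminormedAddCommGroup E] {a b c d : E}
    (hb : ‖b‖ ^ 2 ≤ ‖a‖ * ‖d‖) (hc : ‖c‖ ^ 2 ≤ ‖a‖ * ‖d‖) :
    √‖a + b + c + d‖ ≤ √‖a‖ + √‖d‖ := by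
  have hsq : ∀ {x : E}, ‖x‖ ^ 2 ≤ ‖a‖ * ‖d‖ → ‖x‖ ≤ √‖a‖ * √‖d‖ := fun h => by
    rw [← Real.sqrt_mul (norm_nonneg a)]
    exact Real.le_sqrt_of_sq_le h
  refine Real.sqrt_le_iff.2 ⟨by positivity, ?_⟩
  calc ‖a + b + c + d‖ ≤ ‖a‖ + ‖b‖ + ‖c‖ + ‖d‖ := norm_add₄_le
    _ ≤ ‖a‖ + √‖a‖ * √‖d‖ + √‖a‖ * √‖d‖ + ‖d‖ := by gcongr <;> exact hsq ‹_›
    _ = (√‖a‖ + √‖d‖) ^ 2 := by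
      rw [add_sq, Real.sq_sqrt (norm_nonneg a), Real.sq_sqrt (norm_nonneg d)]
      ring

theorem pNorm_add_le (hP : IsWeakParallelogram P) (f g : X →₀ ℂ) :
    pNorm P (f + g) ≤ pNorm P f + pNorm P g := by
  simp only [pNorm_eq_sqrt_norm hP, pushPair_add_left, pushPair_add_right, ← add_assoc]
  refine sqrt_norm_add_add_add_le ?_ (norm_pushPair_sq_le hP f g)
  rw [mul_comm]
  exact norm_pushPair_sq_le hP g f

theorem pNorm_smul (hP : IsWeakParallelogram P) (c : ℂ) (f : X →₀ ℂ) :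
    pNorm P (c • f) = ‖c‖ * pNorm P f := by
  rw [pNorm_eq_sqrt_norm hP, pNorm_eq_sqrt_norm hP, pushPair_smul_left, pushPair_smul_right,
    smul_smul, norm_smul, norm_mul, Complex.norm_conj, Real.sqrt_mul (by positivity),
    Real.sqrt_mul_self (norm_nonneg c)]

theorem pushPair_apply_cls_self (hP : IsWeakParallelogram P)
    (hdiag : ∀ x y z : X, (x, x, y, z) ∈ P → y = z) (f : X →₀ ℂ) (x : X) :
    pushPair P hP f f (cls P hP x x) = ∑ y ∈ f.support, (Complex.normSq (f y) : ℂ) := by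
  rw [pushPair_apply hP subset_rfl subset_rfl]
  refine sum_congr rfl fun y hy => ?_
  have hne : ∀ z, z ≠ y → cls P hP y z ≠ cls P hP x x := fun z hzy h =>
    hzy (hdiag x y z (hP.symm ((cls_eq_cls_iff hP).1 h))).symm
  rw [sum_eq_single y (fun z _ hzy => if_neg (hne z hzy)) (fun hy' => (hy' hy).elim),
    if_pos ((cls_eq_cls_iff hP).2 (hP.diag y x)), Complex.mul_conj]

theorem eq_zero_of_pNorm_eq_zero (hP : IsWeakParallelogram P)
    (hdiag : ∀ x y z : X, (x, x, y, z) ∈ P → y = z) {f : X →₀ ℂ} (hf : pNorm P f = 0) :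
    f = 0 := by
  rw [pNorm_eq_sqrt_norm hP, Real.sqrt_eq_zero (norm_nonneg _), norm_eq_zero] at hf
  by_contra hf0
  obtain ⟨x, hx⟩ := Finsupp.support_nonempty_iff.2 hf0
  have hsum := pushPair_apply_cls_self hP hdiag f x
  rw [hf, lp.coeFn_zero, Pi.zero_apply] at hsum
  have hpos : 0 < ∑ y ∈ f.support, Complex.normSq (f y) :=
    sum_pos (fun y hy => Complex.normSq_pos.2 (Finsupp.mem_support_iff.1 hy)) ⟨x, hx⟩
  exact hpos.ne' (Complex.ofReal_eq_zero.1 (by rw [Complex.ofReal_sum]; exact hsum.symm))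

theorem pushPair_single_sub_single (hP : IsWeakParallelogram P) {x y z : X}
    (h : (x, x, y, z) ∈ P) (hyz : y ≠ z) :
    pushPair P hP (Finsupp.single y 1 - Finsupp.single z 1)
      (Finsupp.single y 1 - Finsupp.single z 1) = 0 := by
  have hA : (Finsupp.single y 1 - Finsupp.single z 1 : X →₀ ℂ).support ⊆ {y, z} :=
    Finsupp.support_sub.trans
      (union_subset_union Finsupp.support_single_subset Finsupp.support_single_subset)
  have hcls : ∀ a ∈ ({y, z} : Finset X), ∀ b ∈ ({y, z} : Finset X),
      cls P hP a b = cls P hP x x := by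
    simp only [mem_insert, mem_singleton]
    rintro a (rfl | rfl) b (rfl | rfl) <;> refine (cls_eq_cls_iff hP).2 (hP.symm ?_)
    exacts [hP.diag x _, h, hP.diag_comm h, hP.diag x _]
  refine lp.ext (funext fun t => ?_)
  rw [pushPair_apply hP hA hA,
    sum_congr rfl fun a ha => sum_congr rfl fun b hb => by rw [hcls a ha b hb]]
  by_cases ht : cls P hP x x = t <;>
    simp [ht, sum_pair hyz, Finsupp.single_apply, hyz, hyz.symm]

theorem forall_eq_zero_of_pNorm_eq_zero_iff (hP : IsWeakParallelogram P) :
    (∀ f : X →₀ ℂ, pNorm P f = 0 → f = 0) ↔ ∀ x y z : X, (x, x, y, z) ∈ P → y = z := by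
  refine ⟨fun H x y z h => ?_, fun hdiag _ => eq_zero_of_pNorm_eq_zero hP hdiag⟩
  by_contra hyz
  have h0 := H _ (by rw [pNorm_eq_sqrt_norm hP, pushPair_single_sub_single hP h hyz, norm_zero,
    Real.sqrt_zero])
  simpa [Finsupp.single_apply, hyz] using congrArg (· y) h0

end GowersTwoSeminorm

open scoped ComplexOrder in
theorem gowers_two_seminorm_general (X : Type) (P : Set (Quad X))
    (hP : IsWeakParallelogram P) :
    (∀ f : X →₀ ℂ, 0 ≤ gSum2 P f) ∧
    (∀ f : X →₀ ℂ, 0 ≤ pNorm P f) ∧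
    (∀ (c : ℂ) (f : X →₀ ℂ), pNorm P (c • f) = ‖c‖ * pNorm P f) ∧
    (∀ f g : X →₀ ℂ, pNorm P (f + g) ≤ pNorm P f + pNorm P g) ∧
    ((∀ f : X →₀ ℂ, pNorm P f = 0 → f = 0) ↔ IsStrongParallelogram P) := by
  refine ⟨fun f => ?_, fun f => ?_, pNorm_smul hP, pNorm_add_le hP, ?_⟩
  · rw [gSum2_eq_norm_sq hP]
    exact Complex.zero_le_real.2 (sq_nonneg _)
  · rw [pNorm_eq_sqrt_norm hP]
    exact Real.sqrt_nonneg _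
  · rw [forall_eq_zero_of_pNorm_eq_zero_iff hP, isStrongParallelogram_iff hP]

open scoped ComplexOrder in
/-- For a weak parallelogram structure `P` on a nonempty set `X`, the Gowers
sum of any finitely supported `f : X → ℂ` is a nonnegative real, `‖·‖_P` is a seminorm on
finitely supported functions, and it is a norm iff `P` is strong. -/
theorem gowers_two_seminorm (X : Type) [Nonempty X] (P : Set (Quad X))
    (hP : IsWeakParallelogram P) :
    (∀ f : X →₀ ℂ, 0 ≤ gSum2 P f) ∧
    (∀ f : X →₀ ℂ, 0 ≤ pNorm P f) ∧
    (∀ (c : ℂ) (f : X →₀ ℂ), pNorm P (c • f) = ‖c‖ * pNorm P f) ∧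
    (∀ f g : X →₀ ℂ, pNorm P (f + g) ≤ pNorm P f + pNorm P g) ∧
    ((∀ f : X →₀ ℂ, pNorm P f = 0 → f = 0) ↔ IsStrongParallelogram P) :=
  gowers_two_seminorm_general X P hP

end HK
end

section
/- Let X be a finite set with n elements and let 𝒫 ⊆ X⁴ satisfy all the conditions in the definition of a strong parallelogram structure except possibly transitivity of the relation ∼; that is: ∼ (defined by (x00,x01) ∼ (x10,x11) iff (x00,x01,x10,x11) ∈ 𝒫) is reflexive and symmetric; if (x00,x01,x10,x11) ∈ 𝒫 then (x00,x10,x01,x11) ∈ 𝒫; and for all x00,x01,x10 ∈ X there exists a unique x11 ∈ X with (x00,x01,x10,x11) ∈ 𝒫. Assume in addition the positivity relation: for every function F: X² → ℂ, ∑_{(x00,x01,x10,x11)∈𝒫} F(x00,x01)·conj(F(x10,x11)) ≥ 0. Then ∼ is transitive, and hence 𝒫 is a strong parallelogram structure on X. -/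
open scoped Pointwise

/-
If `a ∼ b ∼ c` but `a ≁ c`, test positivity on `F = 𝟙_a - 𝟙_b + 𝟙_c`: the three diagonal
terms give `3`, the pairs from `a ∼ b` and `b ∼ c` give `-4`, and the pairs `(a, c)`, `(c, a)`,
which would give `+2`, are missing, so the form is `-1 < 0`.
-/

open scoped ComplexOrder in
theorem trans_of_posSemidef_kernel {α : Type*} {R : α → α → Prop} (hrefl : ∀ a, R a a)
    (hsymm : ∀ a b, R a b → R b a)
    (hpos : ∀ F : α → ℂ, 0 ≤ ∑ᶠ p ∈ {p : α × α | R p.1 p.2}, F p.1 * starRingEnd ℂ (F p.2))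
    (a b c : α) (hab : R a b) (hbc : R b c) : R a c := by
  classical
  by_contra hac
  have hab' : a ≠ b := by rintro rfl; exact hac hbc
  have hbc' : b ≠ c := by rintro rfl; exact hac hab
  have hac' : a ≠ c := by rintro rfl; exact hac (hrefl a)
  have hca : ¬R c a := fun h => hac (hsymm _ _ h)
  set F : α → ℂ := fun x => if x = b then -1 else if x = a ∨ x = c then 1 else 0
  set T : Finset α := {a, b, c}
  have hform : ∑ᶠ p ∈ {p : α × α | R p.1 p.2}, F p.1 * starRingEnd ℂ (F p.2) = -1 := by
    rw [finsum_mem_eq_sum_of_inter_support_eq _ (t := (T ×ˢ T).filter fun p => R p.1 p.2)]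
    · simp [T, F, Finset.sum_filter, Finset.sum_product, Finset.sum_insert, hab', hbc', hac',
        hbc'.symm, hac'.symm, hrefl, hab, hbc, hac, hca, hsymm _ _ hab, hsymm _ _ hbc]
    · ext ⟨s, t⟩
      simp only [Set.mem_inter_iff, Finset.coe_filter, Function.mem_support, Finset.mem_product,
        Finset.mem_insert, Finset.mem_singleton, F, T]
      grind
  exact absurd (hform ▸ hpos F) (by norm_num)

namespace HK

theorem finsum_mem_quad_eq {X : Type} {M : Type*} [AddCommMonoid M] (P : Set (Quad X))
    (g : X × X → X × X → M) :
    ∑ᶠ q ∈ P, g (q.1, q.2.1) (q.2.2.1, q.2.2.2) =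
      ∑ᶠ p ∈ {p : (X × X) × (X × X) | (p.1.1, p.1.2, p.2.1, p.2.2) ∈ P}, g p.1 p.2 :=
  (finsum_mem_eq_of_bijOn _ (Equiv.prodAssoc X X (X × X)).bijective.bijOn_preimage
    fun _ _ => rfl).symm

open scoped ComplexOrder in
theorem transitivity_from_positivity_general (X : Type)
    (P : Set (Quad X))
    (hrefl : ∀ a b : X, (a, b, a, b) ∈ P)
    (hsymm : ∀ a b c d : X, (a, b, c, d) ∈ P → (c, d, a, b) ∈ P)
    (hswap : ∀ a b c d : X, (a, b, c, d) ∈ P → (a, c, b, d) ∈ P)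
    (hclose : ∀ a b c : X, ∃! d, (a, b, c, d) ∈ P)
    (hpos : ∀ F : X × X → ℂ,
      0 ≤ ∑ᶠ q ∈ P, F (q.1, q.2.1) * (starRingEnd ℂ) (F (q.2.2.1, q.2.2.2))) :
    (∀ a b c d e f : X, (a, b, c, d) ∈ P → (c, d, e, f) ∈ P → (a, b, e, f) ∈ P) ∧
    IsStrongParallelogram P := by
  have htrans : ∀ a b c d e f : X, (a, b, c, d) ∈ P → (c, d, e, f) ∈ P → (a, b, e, f) ∈ P :=
    fun a b c d e f =>
      trans_of_posSemidef_kernel (R := fun p q : X × X => (p.1, p.2, q.1, q.2) ∈ P)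
        (fun p => hrefl p.1 p.2) (fun _ _ => hsymm _ _ _ _)
        (fun F => finsum_mem_quad_eq P (fun s t => F s * starRingEnd ℂ (F t)) ▸ hpos F)
        (a, b) (c, d) (e, f)
  exact ⟨htrans, ⟨hrefl, hsymm, htrans, hswap, fun a b c => (hclose a b c).exists⟩, hclose⟩

open scoped ComplexOrder in
/-- On a finite set, a set `P ⊆ X⁴` satisfying all the axioms of a strong
parallelogram structure except possibly transitivity, together with the positivity relation,
is automatically transitive, hence a strong parallelogram structure. -/
theorem transitivity_from_positivity (X : Type) [Fintype X] [Nonempty X]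
    (P : Set (Quad X))
    (hrefl : ∀ a b : X, (a, b, a, b) ∈ P)
    (hsymm : ∀ a b c d : X, (a, b, c, d) ∈ P → (c, d, a, b) ∈ P)
    (hswap : ∀ a b c d : X, (a, b, c, d) ∈ P → (a, c, b, d) ∈ P)
    (hclose : ∀ a b c : X, ∃! d, (a, b, c, d) ∈ P)
    (hpos : ∀ F : X × X → ℂ,
      0 ≤ ∑ᶠ q ∈ P, F (q.1, q.2.1) * (starRingEnd ℂ) (F (q.2.2.1, q.2.2.2))) :
    (∀ a b c d e f : X, (a, b, c, d) ∈ P → (c, d, e, f) ∈ P → (a, b, e, f) ∈ P) ∧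
    IsStrongParallelogram P :=
  transitivity_from_positivity_general X P hrefl hsymm hswap hclose hpos

end HK
end

section
/- For any group G, the edge group G^{[2,1]} equals {(g00,g01,g10,g11) ∈ G⁴ : g00·g01⁻¹·g10⁻¹·g11 ∈ G₂} and also equals {(g, g·h, g·k, g·h·k·u) : g,h,k ∈ G, u ∈ G₂}. In particular, if G is abelian then G^{[2,1]} = {(g00,g01,g10,g11) ∈ G⁴ : g00·g01⁻¹·g10⁻¹·g11 = 1} = {(g, g·s, g·t, g·s·t) : g,s,t ∈ G}. -/
open scoped Pointwise

namespace HK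

variable {X Y : Type}

/-! Abelianized, `q ↦ g00·g01⁻¹·g10⁻¹·g11` is a homomorphism `G⁴ → G/G₂` killing the generators
of `G^{[2,1]}`. Conversely a quadruple in its kernel factors as
`(g,g,g,g)·(1,h,1,h)·(1,1,k,k)·(1,1,1,u)` with `u ∈ G₂`, and every factor lies in `G^{[2,1]}`:
the last one because `(1,1,1,⁅a,b⁆) = ⁅(1,a,1,a), (1,1,b,b)⁆`. -/

section EdgeGroup

variable {G : Type} [Group G]

theorem diag_mem_edgeGroup2 (g : G) : ((g, g, g, g) : Quad G) ∈ edgeGroup2 G :=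
  Subgroup.subset_closure ⟨g, .inr (.inr rfl)⟩

theorem right_edge_mem_edgeGroup2 (h : G) : ((1, h, 1, h) : Quad G) ∈ edgeGroup2 G := by
  have hleft : ((h, 1, h, 1) : Quad G) ∈ edgeGroup2 G :=
    Subgroup.subset_closure ⟨h, .inr (.inl rfl)⟩
  simpa using mul_mem (diag_mem_edgeGroup2 h) (inv_mem hleft)

theorem bottom_edge_mem_edgeGroup2 (k : G) : ((1, 1, k, k) : Quad G) ∈ edgeGroup2 G := by
  have htop : ((k, k, 1, 1) : Quad G) ∈ edgeGroup2 G := Subgroup.subset_closure ⟨k, .inl rfl⟩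
  simpa using mul_mem (diag_mem_edgeGroup2 k) (inv_mem htop)

open scoped commutatorElement in
theorem corner_mem_edgeGroup2 {u : G} (hu : u ∈ commutator G) :
    ((1, 1, 1, u) : Quad G) ∈ edgeGroup2 G := by
  let corner : G →* Quad G :=
    (MonoidHom.inr G _).comp ((MonoidHom.inr G _).comp (MonoidHom.inr G G))
  suffices commutator G ≤ (edgeGroup2 G).comap corner from this hu
  refine Subgroup.commutator_le.2 fun a _ b _ => ?_
  have hab : corner ⁅a, b⁆ = ⁅((1, a, 1, a) : Quad G), (1, 1, b, b)⁆ := by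
    simp [corner, commutatorElement_def]
  rw [Subgroup.mem_comap, hab, commutatorElement_def]
  have ha := right_edge_mem_edgeGroup2 a
  have hb := bottom_edge_mem_edgeGroup2 b
  exact mul_mem (mul_mem (mul_mem ha hb) (inv_mem ha)) (inv_mem hb)

theorem mk_mem_edgeGroup2 (g h k : G) {u : G} (hu : u ∈ commutator G) :
    ((g, g * h, g * k, g * h * k * u) : Quad G) ∈ edgeGroup2 G := by
  have := mul_mem (mul_mem (mul_mem (diag_mem_edgeGroup2 g) (right_edge_mem_edgeGroup2 h))
    (bottom_edge_mem_edgeGroup2 k)) (corner_mem_edgeGroup2 hu)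
  simpa [mul_assoc] using this

variable (G) in
noncomputable def abelianAltProd : Quad G →* Abelianization G where
  toFun q := Abelianization.of (q.1 * q.2.1⁻¹ * q.2.2.1⁻¹ * q.2.2.2)
  map_one' := by simp
  map_mul' p q := by
    simp only [Prod.fst_mul, Prod.snd_mul, map_mul, map_inv, mul_inv]
    simp [mul_assoc, mul_comm, mul_left_comm]

theorem abelianAltProd_eq_one_iff {q : Quad G} :
    abelianAltProd G q = 1 ↔ q.1 * q.2.1⁻¹ * q.2.2.1⁻¹ * q.2.2.2 ∈ commutator G := by
  rw [← Abelianization.ker_of]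
  rfl

theorem edgeGroup2_le_ker_abelianAltProd : edgeGroup2 G ≤ (abelianAltProd G).ker := by
  rw [edgeGroup2, Subgroup.closure_le]
  rintro q ⟨g, rfl | rfl | rfl⟩ <;> simp [abelianAltProd]

theorem exists_mk_eq_of_abelianAltProd_eq_one {q : Quad G} (hq : abelianAltProd G q = 1) :
    ∃ g h k u : G, u ∈ commutator G ∧ q = (g, g * h, g * k, g * h * k * u) := by
  obtain ⟨a, b, c, d⟩ := q
  refine ⟨a, a⁻¹ * b, a⁻¹ * c, (b * a⁻¹ * c)⁻¹ * d, ?_, by simp [mul_assoc]⟩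
  rw [← Abelianization.ker_of, MonoidHom.mem_ker, ← hq]
  simp [abelianAltProd, mul_comm]

theorem edgeGroup2_eq_ker_abelianAltProd : edgeGroup2 G = (abelianAltProd G).ker := by
  refine le_antisymm edgeGroup2_le_ker_abelianAltProd fun q hq => ?_
  obtain ⟨g, h, k, u, hu, rfl⟩ := exists_mk_eq_of_abelianAltProd_eq_one hq
  exact mk_mem_edgeGroup2 g h k hu

theorem mem_edgeGroup2_iff {q : Quad G} :
    q ∈ edgeGroup2 G ↔ q.1 * q.2.1⁻¹ * q.2.2.1⁻¹ * q.2.2.2 ∈ commutator G := by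
  rw [edgeGroup2_eq_ker_abelianAltProd, MonoidHom.mem_ker, abelianAltProd_eq_one_iff]

theorem mem_edgeGroup2_iff_exists {q : Quad G} :
    q ∈ edgeGroup2 G ↔ ∃ g h k u : G, u ∈ commutator G ∧ q = (g, g * h, g * k, g * h * k * u) := by
  refine ⟨fun hq => exists_mk_eq_of_abelianAltProd_eq_one (edgeGroup2_le_ker_abelianAltProd hq),
    ?_⟩
  rintro ⟨g, h, k, u, hu, rfl⟩
  exact mk_mem_edgeGroup2 g h k hu

end EdgeGroup

/-- The edge group `G^{[2,1]}` equals the set of quadruples with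
`g00·g01⁻¹·g10⁻¹·g11 ∈ G₂`, and also equals `{(g, gh, gk, ghku) : g,h,k ∈ G, u ∈ G₂}`.
If `G` is abelian, it is the set of quadruples with `g00·g01⁻¹·g10⁻¹·g11 = 1`, which is
`{(g, gs, gt, gst)}`. -/
theorem edgeGroup2_description (G : Type) [Group G] :
    ((edgeGroup2 G : Set (Quad G)) =
      {q : Quad G | q.1 * q.2.1⁻¹ * q.2.2.1⁻¹ * q.2.2.2 ∈ commutator G}) ∧
    ((edgeGroup2 G : Set (Quad G)) =
      {q : Quad G | ∃ g h k u : G, u ∈ commutator G ∧ q = (g, g * h, g * k, g * h * k * u)}) ∧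
    ((∀ a b : G, a * b = b * a) →
      ((edgeGroup2 G : Set (Quad G)) =
        {q : Quad G | q.1 * q.2.1⁻¹ * q.2.2.1⁻¹ * q.2.2.2 = 1}) ∧
      ((edgeGroup2 G : Set (Quad G)) =
        {q : Quad G | ∃ g s t : G, q = (g, g * s, g * t, g * s * t)})) := by
  have hdefect : (edgeGroup2 G : Set (Quad G)) =
      {q : Quad G | q.1 * q.2.1⁻¹ * q.2.2.1⁻¹ * q.2.2.2 ∈ commutator G} :=
    Set.ext fun _ => mem_edgeGroup2_iff
  have hparam : (edgeGroup2 G : Set (Quad G)) =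
      {q : Quad G | ∃ g h k u : G, u ∈ commutator G ∧ q = (g, g * h, g * k, g * h * k * u)} :=
    Set.ext fun _ => mem_edgeGroup2_iff_exists
  refine ⟨hdefect, hparam, fun hcomm => ?_⟩
  have hbot : commutator G = ⊥ := (commutator_eq_bot_iff G).2 ⟨⟨hcomm⟩⟩
  constructor
  · simp only [hdefect, hbot, Subgroup.mem_bot]
  · simp only [hparam, hbot, Subgroup.mem_bot, exists_eq_left, mul_one]

end HK
end
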